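/- arXiv:2404.18855 — 3 statements merged into one kernel-verified Lean document; each statement's English description precedes it below -/
import Mathlib

section
/- Let c ∈ [0,∞) and M be a positive integer. Then the set Z_c^{(M)} = { x ∈ 𝕀 : d_n(x) ≤ n + c for all n ≥ M } is countable; consequently it has Hausdorff dimension 0. -/
open Filter Set Topology MeasureTheory
open scoped ENNReal NNReal

/-- The Pierce expansion map `T`. -/
noncomputable def pierceT (x : ℝ) : ℝ := if x = 0 then 0 else 1 - (⌊1 / x⌋₊ : ℝ) * x

/-- The first Pierce digit `d₁(x)`, with `d₁(0) = ∞`. -/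
noncomputable def pierceD1 (x : ℝ) : ℕ∞ := if x = 0 then ⊤ else ((⌊1 / x⌋₊ : ℕ) : ℕ∞)

/-- The `k`-th Pierce expansion digit `d_k(x)` (for `k ≥ 1`). -/
noncomputable def pierceDigit (k : ℕ) (x : ℝ) : ℕ∞ := pierceD1 (pierceT^[k - 1] x)

/-- Extended logarithm on `ℕ∞`, with the convention `log ∞ = ∞`. -/
noncomputable def enlog (m : ℕ∞) : ℝ≥0∞ :=
  if m = ⊤ then ⊤ else ENNReal.ofReal (Real.log ((WithTop.untopD 0 m : ℕ) : ℝ))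

/-- `A(α) = {x ∈ [0,1] : lim (log d_n(x))/n = α}`. -/
noncomputable def pierceA (α : ℝ≥0∞) : Set ℝ :=
  {x ∈ Icc (0 : ℝ) 1 |
    Tendsto (fun n : ℕ => enlog (pierceDigit n x) / (n : ℝ≥0∞)) atTop (𝓝 α)}

/-- The number of leap years up to year `N` with intercalation sequence `σ`:
`L(σ, N) = Σ_{k ≥ 1} (-1)^{k+1} ⌊N/(σ₁⋯σ_k)⌋`, with `⌊N/∞⌋ = 0`. -/
noncomputable def leapL (σ : ℕ → ℕ∞) (N : ℕ) : ℝ :=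
  ∑' k : ℕ, (-1 : ℝ) ^ k *
    ((N / WithTop.untopD 0 (∏ i ∈ Finset.Icc 1 (k + 1), σ i) : ℕ) : ℝ)

/-- The quotient `(Nx - L((d_k(x))_k, N))/√(log N)`. -/
noncomputable def leapQ (x : ℝ) (N : ℕ) : ℝ :=
  ((N : ℝ) * x - leapL (fun k => pierceDigit k x) N) / Real.sqrt (Real.log N)

/-- `S(α)`: the set of `x ∈ [0,1]` whose leap-year quotient has limsup `1/√(2α)`
and liminf `-1/√(2α)`. -/
noncomputable def pierceS (α : ℝ≥0∞) : Set ℝ :=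
  {x ∈ Icc (0 : ℝ) 1 |
    Filter.limsup (fun N : ℕ => ((leapQ x N : ℝ) : EReal)) atTop
      = (((2 * α) ^ (-(1 / 2) : ℝ) : ℝ≥0∞) : EReal) ∧
    Filter.liminf (fun N : ℕ => ((leapQ x N : ℝ) : EReal)) atTop
      = -(((2 * α) ^ (-(1 / 2) : ℝ) : ℝ≥0∞) : EReal)}

/-- The fundamental interval `I_σ` associated with the finite sequence `σ 1, …, σ n`. -/
def fundI (n : ℕ) (σ : ℕ → ℕ) : Set ℝ :=
  {x ∈ Icc (0 : ℝ) 1 | ∀ k, 1 ≤ k → k ≤ n → pierceDigit k x = ((σ k : ℕ) : ℕ∞)}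

/-!
For irrational `x` the map `T` keeps `x` irrational in `(0, 1)` and strictly raises the first digit,
so the digit sequence is strictly increasing and `d_n(x) - n` is non-decreasing. On `Z_c^{(M)}` it
is also bounded by `c`, hence eventually constant: the digit sequence is eventually `n ↦ n + j`,
and there are only countably many such sequences. Finally, the digits determine `x`: on the set of
points sharing the first digit `d`, `T` is affine with slope `-d`, so `T^n` expands distances by
`d₁ ⋯ d_n ≥ n!` while keeping points in `(0, 1)`.
-/

lemma exists_eventually_eq_add_of_strictMono {s : ℕ → ℕ} (hs : StrictMono s) {C : ℕ}
    (hC : ∀ᶠ k in atTop, s k ≤ k + C) : ∃ j, ∀ᶠ k in atTop, s k = k + j := by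
  set g : ℕ → ℕ := fun k => s k - k
  have hg : Monotone g := monotone_nat_of_le_succ fun k => by
    have := hs (Nat.lt_add_one k)
    simp only [g]
    omega
  obtain ⟨N, hN⟩ := eventually_atTop.mp hC
  have hbdd : BddAbove (range g) := ⟨C, by
    rintro _ ⟨k, rfl⟩
    have := hN (max k N) (le_max_right k N)
    exact (hg (le_max_left k N)).trans (by simp only [g]; omega)⟩
  have hlim : ∀ᶠ k in atTop, g k = ⨆ i, g i := by
    simpa [nhds_discrete] using tendsto_atTop_ciSup hg hbdd
  refine ⟨⨆ i, g i, hlim.mono fun k hk => ?_⟩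
  have hk : s k - k = ⨆ i, g i := hk
  have := hs.id_le k
  simp only [id] at this
  omega

lemma countable_setOf_eventuallyEq {β : Type*} [Countable β] (t : ℕ → β) :
    {s : ℕ → β | s =ᶠ[atTop] t}.Countable := by
  refine (countable_iUnion fun N : ℕ =>
    countable_range fun (u : Fin N → β) k => if h : k < N then u ⟨k, h⟩ else t k).mono ?_
  intro s hs
  obtain ⟨N, hN⟩ := eventually_atTop.mp hs
  refine mem_iUnion.mpr ⟨N, fun i => s i, funext fun k => ?_⟩
  dsimp only
  split_ifs with h
  · rfl
  · exact (hN k (not_lt.mp h)).symm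

def irrationalsIcc : Set ℝ := {x | x ∈ Icc 0 1 ∧ Irrational x}

/-- The digit sequence indexed from `0`: `pierceDigits x k = d_{k+1}(x)` for irrational `x`. -/
noncomputable def pierceDigits (x : ℝ) (k : ℕ) : ℕ := ⌊1 / pierceT^[k] x⌋₊

def pierceZ (c : ℝ) (M : ℕ) : Set ℝ :=
  {x ∈ Icc (0 : ℝ) 1 | Irrational x ∧
    ∀ n, M ≤ n → ∃ m : ℕ, pierceDigit n x = ((m : ℕ) : ℕ∞) ∧ (m : ℝ) ≤ n + c}

section Pierce

variable {x y : ℝ}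

lemma pos_of_mem_irrationalsIcc (hx : x ∈ irrationalsIcc) : 0 < x :=
  hx.1.1.lt_of_ne hx.2.ne_zero.symm

lemma floor_one_div_bounds (hx : x ∈ irrationalsIcc) :
    1 ≤ ⌊1 / x⌋₊ ∧ (⌊1 / x⌋₊ : ℝ) * x < 1 ∧ 1 < ((⌊1 / x⌋₊ : ℝ) + 1) * x := by
  have hx₀ := pos_of_mem_irrationalsIcc hx
  have hfloor_lt : (⌊1 / x⌋₊ : ℝ) < 1 / x :=
    (Nat.floor_le (by positivity)).lt_of_ne (by simpa using (hx.2.inv.ne_nat _).symm)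
  refine ⟨(Nat.one_le_floor_iff _).mpr (one_le_one_div hx₀ hx.1.2), ?_, ?_⟩
  · rwa [lt_div_iff₀ hx₀] at hfloor_lt
  · have := Nat.lt_floor_add_one (1 / x)
    rwa [div_lt_iff₀ hx₀] at this

lemma pierceT_of_ne_zero (hx : x ≠ 0) : pierceT x = 1 - ⌊1 / x⌋₊ * x := if_neg hx

lemma mapsTo_pierceT : MapsTo pierceT irrationalsIcc irrationalsIcc := by
  intro x hx
  obtain ⟨hm, hmx, -⟩ := floor_one_div_bounds hx
  rw [pierceT_of_ne_zero hx.2.ne_zero]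
  have hx₀ := pos_of_mem_irrationalsIcc hx
  refine ⟨⟨by linarith, by nlinarith⟩, ?_⟩
  simpa using (irrational_natCast_sub_iff (n := 1)).mpr (hx.2.natCast_mul (m := ⌊1 / x⌋₊) (by omega))

lemma floor_one_div_lt_floor_one_div_pierceT (hx : x ∈ irrationalsIcc) :
    ⌊1 / x⌋₊ < ⌊1 / pierceT x⌋₊ := by
  obtain ⟨hm, hmx, hm₁x⟩ := floor_one_div_bounds hx
  have hT₀ := pos_of_mem_irrationalsIcc (mapsTo_pierceT hx)
  have hm' : (1 : ℝ) ≤ ⌊1 / x⌋₊ := by exact_mod_cast hm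
  refine Nat.lt_iff_add_one_le.mpr (Nat.le_floor ?_)
  rw [Nat.cast_add_one, le_div_iff₀ hT₀, pierceT_of_ne_zero hx.2.ne_zero]
  nlinarith

lemma pierceDigit_succ_eq (hx : x ∈ irrationalsIcc) (k : ℕ) :
    pierceDigit (k + 1) x = pierceDigits x k := by
  simp [pierceDigit, pierceD1, pierceDigits, ((mapsTo_pierceT.iterate k) hx).2.ne_zero]

lemma strictMono_pierceDigits (hx : x ∈ irrationalsIcc) : StrictMono (pierceDigits x) :=
  strictMono_nat_of_lt_succ fun k => by
    simpa [pierceDigits, Function.iterate_succ_apply'] using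
      floor_one_div_lt_floor_one_div_pierceT ((mapsTo_pierceT.iterate k) hx)

lemma succ_le_pierceDigits (hx : x ∈ irrationalsIcc) (k : ℕ) : k + 1 ≤ pierceDigits x k := by
  induction k with
  | zero => exact (floor_one_div_bounds hx).1
  | succ k ih => exact Nat.succ_le_of_lt (ih.trans_lt (strictMono_pierceDigits hx k.lt_add_one))

lemma abs_pierceT_sub_pierceT (hx : x ≠ 0) (hy : y ≠ 0) (h : ⌊1 / x⌋₊ = ⌊1 / y⌋₊) :
    |pierceT x - pierceT y| = ⌊1 / x⌋₊ * |x - y| := by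
  rw [pierceT_of_ne_zero hx, pierceT_of_ne_zero hy, ← h,
    show 1 - ⌊1 / x⌋₊ * x - (1 - ⌊1 / x⌋₊ * y) = (⌊1 / x⌋₊ : ℝ) * (y - x) by ring,
    abs_mul, Nat.abs_cast, abs_sub_comm]

lemma abs_iterate_pierceT_sub (hx : x ∈ irrationalsIcc) (hy : y ∈ irrationalsIcc)
    (h : pierceDigits x = pierceDigits y) (n : ℕ) :
    |pierceT^[n] x - pierceT^[n] y| = (∏ i ∈ Finset.range n, (pierceDigits x i : ℝ)) * |x - y| := by
  induction n with
  | zero => simp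
  | succ n ih =>
    rw [Function.iterate_succ_apply', Function.iterate_succ_apply',
      abs_pierceT_sub_pierceT ((mapsTo_pierceT.iterate n) hx).2.ne_zero
        ((mapsTo_pierceT.iterate n) hy).2.ne_zero (congrFun h n),
      ih, Finset.prod_range_succ]
    simp only [pierceDigits]
    ring

lemma factorial_le_prod_pierceDigits (hx : x ∈ irrationalsIcc) (n : ℕ) :
    n.factorial ≤ ∏ i ∈ Finset.range n, pierceDigits x i := by
  rw [← Finset.prod_range_add_one_eq_factorial]
  exact Finset.prod_le_prod' fun i _ => succ_le_pierceDigits hx i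

lemma injOn_pierceDigits : InjOn pierceDigits irrationalsIcc := by
  intro x hx y hy h
  by_contra hne
  have hpos : 0 < |x - y| := abs_pos.mpr (sub_ne_zero.mpr hne)
  obtain ⟨n, hn⟩ := exists_nat_gt (1 / |x - y|)
  have hTx := (mapsTo_pierceT.iterate n) hx
  have hTy := (mapsTo_pierceT.iterate n) hy
  have : (n : ℝ) * |x - y| ≤ 1 :=
    calc (n : ℝ) * |x - y|
      _ ≤ (∏ i ∈ Finset.range n, (pierceDigits x i : ℝ)) * |x - y| := by
        gcongr
        exact_mod_cast (Nat.self_le_factorial n).trans (factorial_le_prod_pierceDigits hx n)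
      _ = |pierceT^[n] x - pierceT^[n] y| := (abs_iterate_pierceT_sub hx hy h n).symm
      _ ≤ 1 := abs_sub_le_iff.mpr ⟨by linarith [hTx.1.2, hTy.1.1], by linarith [hTx.1.1, hTy.1.2]⟩
  rw [div_lt_iff₀ hpos] at hn
  linarith

end Pierce

lemma pierceZ_subset_irrationalsIcc (c : ℝ) (M : ℕ) : pierceZ c M ⊆ irrationalsIcc :=
  fun _ hx => ⟨hx.1, hx.2.1⟩

lemma pierceDigits_eventuallyEq_add {c : ℝ} {M : ℕ} {x : ℝ} (hx : x ∈ pierceZ c M) :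
    ∃ j, pierceDigits x =ᶠ[atTop] fun k => k + j := by
  have hxI := pierceZ_subset_irrationalsIcc c M hx
  refine exists_eventually_eq_add_of_strictMono (strictMono_pierceDigits hxI) (C := ⌈c⌉₊ + 1) ?_
  filter_upwards [eventually_ge_atTop M] with k hk
  obtain ⟨m, hm, hmc⟩ := hx.2.2 (k + 1) (by omega)
  rw [pierceDigit_succ_eq hxI, Nat.cast_inj] at hm
  have : (m : ℝ) ≤ (k + (⌈c⌉₊ + 1) : ℕ) := by
    push_cast at hmc ⊢
    linarith [Nat.le_ceil c]
  exact hm ▸ Nat.cast_le.mp this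

lemma countable_pierceZ (c : ℝ) (M : ℕ) : (pierceZ c M).Countable :=
  MapsTo.countable_of_injOn (t := ⋃ j : ℕ, {s | s =ᶠ[atTop] fun k => k + j})
    (fun _ hx => mem_iUnion.mpr (pierceDigits_eventuallyEq_add hx))
    (injOn_pierceDigits.mono (pierceZ_subset_irrationalsIcc c M))
    (countable_iUnion fun _ => countable_setOf_eventuallyEq _)

theorem stmt13_general (c : ℝ) (M : ℕ) :
    ({x ∈ Set.Icc (0 : ℝ) 1 | Irrational x ∧
        ∀ n, M ≤ n → ∃ m : ℕ, pierceDigit n x = ((m : ℕ) : ℕ∞) ∧ (m : ℝ) ≤ n + c} : Set ℝ).Countable ∧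
    dimH ({x ∈ Set.Icc (0 : ℝ) 1 | Irrational x ∧
        ∀ n, M ≤ n → ∃ m : ℕ, pierceDigit n x = ((m : ℕ) : ℕ∞) ∧ (m : ℝ) ≤ n + c} : Set ℝ) = 0 :=
  ⟨countable_pierceZ c M, (countable_pierceZ c M).dimH_zero⟩

theorem stmt13 (c : ℝ) (hc : 0 ≤ c) (M : ℕ) (hM : 1 ≤ M) :
    ({x ∈ Set.Icc (0 : ℝ) 1 | Irrational x ∧
        ∀ n, M ≤ n → ∃ m : ℕ, pierceDigit n x = ((m : ℕ) : ℕ∞) ∧ (m : ℝ) ≤ n + c} : Set ℝ).Countable ∧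
    dimH ({x ∈ Set.Icc (0 : ℝ) 1 | Irrational x ∧
        ∀ n, M ≤ n → ∃ m : ℕ, pierceDigit n x = ((m : ℕ) : ℕ∞) ∧ (m : ℝ) ≤ n + c} : Set ℝ) = 0 :=
  stmt13_general c M
end

section
/- Let x ∈ [0,1] and α ∈ [0,∞]. If lim_{n→∞} (log d_n(x))/n = α, then lim_{n→∞} (log(d₁(x)·d₂(x)⋯d_n(x)))/(n²/2) = α (as a limit in [0,∞]). -/
open Filter Set Topology MeasureTheory
open scoped ENNReal NNReal

/-!
The digits of `x ∈ [0, 1]` never vanish, so `log (d₁ ⋯ dₙ) = Σ log dᵢ` and the claim is an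
instance of Stolz–Cesàro: if `aₙ / n → α` then `(a₁ + ⋯ + aₙ) / (1 + ⋯ + n) → α`, and
`1 + ⋯ + n ∼ n² / 2`. In `ℝ≥0∞` this needs the `aₙ` to be finite when `α` is; this holds here
because `dₖ = ∞` means `T^{k-1} x = 0`, a fixed point of `T`, after which every digit is `∞`
and `log dₙ / n → ∞`.
-/

namespace ENNReal

variable {a b : ℕ → ℝ≥0∞} {α : ℝ≥0∞}

lemma tendsto_sum_range_sub_div_sum_range (hb : ∀ n, b n ≠ ⊤)
    (hS : Tendsto (fun n => ∑ i ∈ Finset.range n, b i) atTop (𝓝 ⊤)) (m : ℕ) :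
    Tendsto (fun n => (∑ i ∈ Finset.range n, b i - ∑ i ∈ Finset.range m, b i) /
      ∑ i ∈ Finset.range n, b i) atTop (𝓝 1) := by
  set S := fun n => ∑ i ∈ Finset.range n, b i
  have hSfin : ∀ n, S n ≠ ⊤ := fun n => sum_ne_top.2 fun i _ => hb i
  have hSm : Tendsto (fun n => S m / S n) atTop (𝓝 0) := by
    simpa using ENNReal.Tendsto.const_div hS (Or.inr (hSfin m))
  have heq : (fun n => 1 - S m / S n) =ᶠ[atTop] fun n => (S n - S m) / S n := by
    filter_upwards [hS.eventually_ne top_ne_zero] with n hn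
    rw [ENNReal.sub_div fun _ _ => hn, ENNReal.div_self hn (hSfin n)]
  simpa using (ENNReal.Tendsto.sub tendsto_const_nhds hSm (Or.inl one_ne_top)).congr' heq

lemma le_liminf_sum_div_sum (hb : ∀ n, b n ≠ ⊤)
    (hS : Tendsto (fun n => ∑ i ∈ Finset.range n, b i) atTop (𝓝 ⊤))
    (h : Tendsto (fun n => a n / b n) atTop (𝓝 α)) :
    α ≤ liminf (fun n => (∑ i ∈ Finset.range n, a i) / ∑ i ∈ Finset.range n, b i) atTop := by
  refine le_of_forall_lt_imp_le_of_dense fun β hβ => ?_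
  obtain ⟨m, hm⟩ := eventually_atTop.1 (h.eventually (eventually_gt_nhds hβ))
  have hlow : ∀ n ≥ m, β * (∑ i ∈ Finset.range n, b i - ∑ i ∈ Finset.range m, b i)
      ≤ ∑ i ∈ Finset.range n, a i := fun n hn =>
    calc β * (∑ i ∈ Finset.range n, b i - ∑ i ∈ Finset.range m, b i)
        = ∑ i ∈ Finset.Ico m n, β * b i := by
          rw [← Finset.sum_range_add_sum_Ico _ hn,
            ENNReal.add_sub_cancel_left (sum_ne_top.2 fun i _ => hb i), Finset.mul_sum]
      _ ≤ ∑ i ∈ Finset.Ico m n, a i :=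
          Finset.sum_le_sum fun i hi => mul_le_of_le_div (hm i (Finset.mem_Ico.1 hi).1).le
      _ ≤ ∑ i ∈ Finset.range n, a i := by
          rw [← Finset.sum_range_add_sum_Ico _ hn]; exact le_add_self
  have hlim := ENNReal.Tendsto.const_mul
    (tendsto_sum_range_sub_div_sum_range hb hS m) (Or.inr (hβ.trans_le le_top).ne)
  rw [mul_one] at hlim
  calc β = liminf _ atTop := hlim.liminf_eq.symm
    _ ≤ _ := liminf_le_liminf <| eventually_atTop.2 ⟨m, fun n hn => by
        rw [← mul_div_assoc]; exact ENNReal.div_le_div_right (hlow n hn) _⟩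

lemma limsup_sum_div_sum_le (ha : ∀ n, a n ≠ ⊤) (hb : ∀ n, b n ≠ ⊤)
    (hS : Tendsto (fun n => ∑ i ∈ Finset.range n, b i) atTop (𝓝 ⊤))
    (h : Tendsto (fun n => a n / b n) atTop (𝓝 α)) :
    limsup (fun n => (∑ i ∈ Finset.range n, a i) / ∑ i ∈ Finset.range n, b i) atTop ≤ α := by
  refine le_of_forall_gt_imp_ge_of_dense fun γ hγ => ?_
  rcases eq_or_ne γ ⊤ with rfl | hγ_top
  · exact le_top
  obtain ⟨m, hm⟩ := eventually_atTop.1 (h.eventually (eventually_lt_nhds hγ))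
  set A := ∑ i ∈ Finset.range m, a i
  have hup : ∀ n ≥ m, ∑ i ∈ Finset.range n, a i ≤ A + γ * ∑ i ∈ Finset.range n, b i :=
    fun n hn => calc ∑ i ∈ Finset.range n, a i
        = A + ∑ i ∈ Finset.Ico m n, a i := (Finset.sum_range_add_sum_Ico _ hn).symm
      _ ≤ A + ∑ i ∈ Finset.Ico m n, γ * b i := by
          gcongr with i hi
          exact (ENNReal.div_le_iff_le_mul (Or.inr hγ_top) (Or.inl (hb i))).1
            (hm i (Finset.mem_Ico.1 hi).1).le
      _ ≤ A + γ * ∑ i ∈ Finset.range n, b i := by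
          rw [← Finset.mul_sum]
          gcongr
          rw [Finset.range_eq_Ico]
          exact Finset.Ico_subset_Ico_left (Nat.zero_le m)
  have hA : Tendsto (fun n => A / ∑ i ∈ Finset.range n, b i) atTop (𝓝 0) := by
    simpa using ENNReal.Tendsto.const_div hS (Or.inr (sum_ne_top.2 fun i _ => ha i))
  calc limsup _ atTop
      ≤ limsup (fun n => A / ∑ i ∈ Finset.range n, b i + γ) atTop :=
        limsup_le_limsup <| eventually_atTop.2 ⟨m, fun n hn => by
          refine (ENNReal.div_le_div_right (hup n hn) _).trans ?_
          rw [ENNReal.add_div, mul_div_assoc]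
          exact add_le_add_right (mul_le_of_le_one_right' ENNReal.div_self_le_one) _⟩
    _ = γ := by simpa using (hA.add_const γ).limsup_eq

theorem tendsto_sum_div_sum_of_tendsto_div (ha : α ≠ ⊤ → ∀ n, a n ≠ ⊤) (hb : ∀ n, b n ≠ ⊤)
    (hS : Tendsto (fun n => ∑ i ∈ Finset.range n, b i) atTop (𝓝 ⊤))
    (h : Tendsto (fun n => a n / b n) atTop (𝓝 α)) :
    Tendsto (fun n => (∑ i ∈ Finset.range n, a i) / ∑ i ∈ Finset.range n, b i) atTop (𝓝 α) := by
  refine tendsto_of_le_liminf_of_limsup_le (le_liminf_sum_div_sum hb hS h) ?_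
  rcases eq_or_ne α ⊤ with rfl | hα
  · exact le_top
  · exact limsup_sum_div_sum_le (ha hα) hb hS h

lemma sum_range_add_one_mul_two (n : ℕ) :
    (∑ i ∈ Finset.range n, ((i : ℝ≥0∞) + 1)) * 2 = (n : ℝ≥0∞) ^ 2 + n := by
  induction n with
  | zero => simp
  | succ n ih => rw [Finset.sum_range_succ, add_mul, ih]; push_cast; ring

lemma tendsto_sum_range_add_one_div_sq_half :
    Tendsto (fun n : ℕ => (∑ i ∈ Finset.range n, ((i : ℝ≥0∞) + 1)) / ((n : ℝ≥0∞) ^ 2 / 2))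
      atTop (𝓝 1) := by
  have heq : (fun n : ℕ => 1 + (n : ℝ≥0∞)⁻¹) =ᶠ[atTop]
      fun n => (∑ i ∈ Finset.range n, ((i : ℝ≥0∞) + 1)) / ((n : ℝ≥0∞) ^ 2 / 2) := by
    filter_upwards [eventually_ne_atTop 0] with n hn
    have hn0 : (n : ℝ≥0∞) ≠ 0 := by exact_mod_cast hn
    rw [div_eq_mul_inv, ENNReal.inv_div (Or.inl ofNat_ne_top) (Or.inl two_ne_zero),
      ← mul_div_assoc, sum_range_add_one_mul_two, ENNReal.add_div,
      ENNReal.div_self (pow_ne_zero 2 hn0) (pow_ne_top (natCast_ne_top n)), pow_two,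
      ENNReal.div_eq_inv_mul, ENNReal.mul_inv (Or.inl hn0) (Or.inr hn0), mul_assoc,
      ENNReal.inv_mul_cancel hn0 (natCast_ne_top n), mul_one]
  simpa using (tendsto_const_nhds.add ENNReal.tendsto_inv_nat_nhds_zero).congr' heq

lemma tendsto_sum_range_add_one_top :
    Tendsto (fun n : ℕ => ∑ i ∈ Finset.range n, ((i : ℝ≥0∞) + 1)) atTop (𝓝 ⊤) := by
  refine tendsto_nhds_top_mono tendsto_nat_nhds_top (Eventually.of_forall fun n => ?_)
  calc (n : ℝ≥0∞) = ∑ _i ∈ Finset.range n, 1 := by simp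
    _ ≤ _ := Finset.sum_le_sum fun i _ => le_add_self

theorem tendsto_sum_Icc_div_sq_half_of_tendsto_div (ha : α ≠ ⊤ → ∀ n, a (n + 1) ≠ ⊤)
    (h : Tendsto (fun n : ℕ => a n / n) atTop (𝓝 α)) :
    Tendsto (fun n : ℕ => (∑ i ∈ Finset.Icc 1 n, a i) / ((n : ℝ≥0∞) ^ 2 / 2)) atTop (𝓝 α) := by
  have hshift : Tendsto (fun n : ℕ => a (n + 1) / ((n : ℝ≥0∞) + 1)) atTop (𝓝 α) := by
    simpa using (tendsto_add_atTop_iff_nat 1).2 h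
  have hstolz := ENNReal.Tendsto.mul (tendsto_sum_div_sum_of_tendsto_div ha (fun n => add_ne_top.2
    ⟨natCast_ne_top n, one_ne_top⟩) tendsto_sum_range_add_one_top hshift)
      (Or.inr one_ne_top) tendsto_sum_range_add_one_div_sq_half (Or.inl one_ne_zero)
  rw [mul_one] at hstolz
  refine hstolz.congr' (eventually_atTop.2 ⟨1, fun n hn => ?_⟩)
  have hS0 : ∑ i ∈ Finset.range n, ((i : ℝ≥0∞) + 1) ≠ 0 := by
    simpa [Finset.sum_eq_zero_iff] using ⟨0, hn⟩
  have hIcc : ∑ i ∈ Finset.Icc 1 n, a i = ∑ i ∈ Finset.range n, a (i + 1) := by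
    rw [Finset.range_eq_Ico, Finset.sum_Ico_add', ← Finset.Ico_add_one_right_eq_Icc]
  rw [← mul_div_assoc, ENNReal.div_mul_cancel hS0
    (sum_ne_top.2 fun i _ => add_ne_top.2 ⟨natCast_ne_top i, one_ne_top⟩), ← hIcc]

end ENNReal

lemma pierceT_mem_Icc {x : ℝ} (hx : x ∈ Icc (0 : ℝ) 1) : pierceT x ∈ Icc (0 : ℝ) 1 := by
  rcases eq_or_ne x 0 with rfl | hx0
  · simp [pierceT]
  have hpos : 0 < x := hx.1.lt_of_ne' hx0
  have hfloor_le : (⌊1 / x⌋₊ : ℝ) * x ≤ 1 := (le_div_iff₀ hpos).1 (Nat.floor_le (by positivity))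
  have hfloor_gt : 1 - x < (⌊1 / x⌋₊ : ℝ) * x := by
    have := mul_lt_mul_of_pos_right (Nat.sub_one_lt_floor (1 / x)) hpos
    rwa [sub_mul, one_div_mul_cancel hx0, one_mul] at this
  rw [pierceT, if_neg hx0]
  constructor <;> linarith [hx.2]

lemma pierceT_iterate_mem_Icc {x : ℝ} (hx : x ∈ Icc (0 : ℝ) 1) (k : ℕ) :
    pierceT^[k] x ∈ Icc (0 : ℝ) 1 := by
  induction k with
  | zero => exact hx
  | succ k ih => rw [Function.iterate_succ_apply']; exact pierceT_mem_Icc ih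

lemma pierceD1_ne_zero {y : ℝ} (hy : y ∈ Icc (0 : ℝ) 1) : pierceD1 y ≠ 0 := by
  rcases eq_or_ne y 0 with rfl | hy0
  · simp [pierceD1]
  have hfloor : 1 ≤ ⌊1 / y⌋₊ :=
    Nat.le_floor (by rw [Nat.cast_one]; exact one_le_one_div (hy.1.lt_of_ne' hy0) hy.2)
  rw [pierceD1, if_neg hy0]
  exact_mod_cast (Nat.one_le_iff_ne_zero.1 hfloor)

lemma pierceDigit_ne_zero {x : ℝ} (hx : x ∈ Icc (0 : ℝ) 1) (k : ℕ) : pierceDigit k x ≠ 0 :=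
  pierceD1_ne_zero (pierceT_iterate_mem_Icc hx _)

lemma pierceDigit_eq_top_iff {k : ℕ} {x : ℝ} : pierceDigit k x = ⊤ ↔ pierceT^[k - 1] x = 0 := by
  rw [pierceDigit, pierceD1]
  split_ifs with h <;> simp [h]

lemma pierceDigit_eq_top_of_le {k n : ℕ} {x : ℝ} (h : pierceDigit k x = ⊤) (hkn : k ≤ n) :
    pierceDigit n x = ⊤ := by
  rw [pierceDigit_eq_top_iff] at h ⊢
  rw [show n - 1 = (n - 1 - (k - 1)) + (k - 1) by omega, Function.iterate_add_apply, h,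
    Function.iterate_fixed (by simp [pierceT]) _]

lemma enlog_top : enlog ⊤ = ⊤ := if_pos rfl

lemma eq_top_of_enlog_eq_top {m : ℕ∞} (h : enlog m = ⊤) : m = ⊤ := by
  by_contra hm
  rw [enlog, if_neg hm] at h
  exact ENNReal.ofReal_ne_top h

lemma enlog_natCast (m : ℕ) : enlog m = ENNReal.ofReal (Real.log m) := by
  simp [enlog]

lemma enlog_mul {a b : ℕ∞} (ha : a ≠ 0) (hb : b ≠ 0) : enlog (a * b) = enlog a + enlog b := by
  rcases eq_or_ne a ⊤ with rfl | ha_top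
  · rw [ENat.top_mul hb, enlog_top, top_add]
  rcases eq_or_ne b ⊤ with rfl | hb_top
  · rw [ENat.mul_top ha, enlog_top, add_top]
  lift a to ℕ using ha_top
  lift b to ℕ using hb_top
  have ha1 : (1 : ℝ) ≤ a := by exact_mod_cast Nat.one_le_iff_ne_zero.2 (by exact_mod_cast ha)
  have hb1 : (1 : ℝ) ≤ b := by exact_mod_cast Nat.one_le_iff_ne_zero.2 (by exact_mod_cast hb)
  rw [← Nat.cast_mul, enlog_natCast, enlog_natCast, enlog_natCast, Nat.cast_mul,
    Real.log_mul (by positivity) (by positivity),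
    ENNReal.ofReal_add (Real.log_nonneg ha1) (Real.log_nonneg hb1)]

lemma enlog_prod {ι : Type*} (s : Finset ι) (g : ι → ℕ∞) (hg : ∀ i ∈ s, g i ≠ 0) :
    enlog (∏ i ∈ s, g i) = ∑ i ∈ s, enlog (g i) := by
  classical
  induction s using Finset.induction_on with
  | empty => simpa using enlog_natCast 1
  | insert a s ha ih =>
    rw [Finset.prod_insert ha, Finset.sum_insert ha,
      enlog_mul (hg a (Finset.mem_insert_self a s))
        (Finset.prod_ne_zero_iff.2 fun i hi => hg i (Finset.mem_insert_of_mem hi)),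
      ih fun i hi => hg i (Finset.mem_insert_of_mem hi)]

lemma enlog_pierceDigit_ne_top {x : ℝ} {α : ℝ≥0∞}
    (h : Tendsto (fun n : ℕ => enlog (pierceDigit n x) / (n : ℝ≥0∞)) atTop (𝓝 α)) (hα : α ≠ ⊤)
    (k : ℕ) : enlog (pierceDigit k x) ≠ ⊤ := by
  intro hk
  have htop : (fun n : ℕ => enlog (pierceDigit n x) / (n : ℝ≥0∞)) =ᶠ[atTop] fun _ => ⊤ := by
    filter_upwards [eventually_ge_atTop k] with n hn
    rw [pierceDigit_eq_top_of_le (eq_top_of_enlog_eq_top hk) hn, enlog_top,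
      ENNReal.top_div_of_ne_top (ENNReal.natCast_ne_top n)]
  exact hα (tendsto_nhds_unique h (tendsto_const_nhds.congr' htop.symm))

theorem stmt14 (x : ℝ) (hx : x ∈ Set.Icc (0 : ℝ) 1) (α : ℝ≥0∞)
    (h : Tendsto (fun n : ℕ => enlog (pierceDigit n x) / (n : ℝ≥0∞)) atTop (𝓝 α)) :
    Tendsto (fun n : ℕ =>
        enlog (∏ i ∈ Finset.Icc 1 n, pierceDigit i x) / ((n : ℝ≥0∞) ^ 2 / 2))
      atTop (𝓝 α) := by
  simp_rw [enlog_prod _ _ fun i _ => pierceDigit_ne_zero hx i]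
  exact ENNReal.tendsto_sum_Icc_div_sq_half_of_tendsto_div
    (fun hα n => enlog_pierceDigit_ne_top h hα (n + 1)) h
end

section
/- For Lebesgue-almost every x ∈ [0,1], lim_{n→∞} (log d_n(x))/n = 1; equivalently, the set A(1) has full Lebesgue measure in [0,1]. -/
open Filter Set Topology MeasureTheory
open scoped ENNReal NNReal

/-!
For Lebesgue-random `x`, `T^k x` behaves like a product of `k + 1` independent uniform variables,
so `-log (T^k x) ≈ k + 1`, and `d_{k+1}(x) = ⌊1 / T^k x⌋` has the same logarithm up to `log 2`.

On the branch `(1/(a+1), 1/a]` where the first digit is `a`, `T x = 1 - a x` maps affinely onto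
`[0, 1/(a+1))` with Jacobian `1/a`. Hence if `S` has mass at most `C n^{-q}` in `(0, 1/(n+1)]`,
then `T⁻¹ S` has mass at most `C ∑_{a > n} a^{-(q+1)} ≤ (C/q) n^{-q}` there: each pull-back costs
a factor `1/q`. Starting from `S = [t, ∞)` (`q = 1 + s`, `C = t^{-s}`) and `S = (-∞, t]`
(`q = 1 - s`, `C = t^s`) this is a Chernoff bound, which makes the measures of
`{T^k x ≥ e^{-a(k+1)}}` (`a < 1`) and `{T^k x ≤ e^{-b(k+1)}}` (`b > 1`) decay geometrically;
Borel–Cantelli concludes.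
-/

lemma Real.min_le_rpow_mul_rpow {x y s : ℝ} (hx : 0 ≤ x) (hy : 0 ≤ y) (hs0 : 0 ≤ s) (hs1 : s ≤ 1) :
    min x y ≤ x ^ s * y ^ (1 - s) := by
  have hm : 0 ≤ min x y := le_min hx hy
  calc min x y = min x y ^ s * min x y ^ (1 - s) := by
        rw [← Real.rpow_add' hm (by norm_num), add_sub_cancel, Real.rpow_one]
    _ ≤ x ^ s * y ^ (1 - s) := by
        gcongr
        exacts [min_le_left _ _, min_le_right _ _]

lemma Real.exists_exp_mul_lt_one_add {a : ℝ} (ha : a < 1) :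
    ∃ s > 0, Real.exp (a * s) < 1 + s := by
  refine ⟨1 - a, by linarith, ?_⟩
  -- `exp (-(a * (1 - a))) ≥ 1 - a * (1 - a)` and `(2 - a) * (1 - a * (1 - a)) = 1 + (1 - a) ^ 3`
  have hF := Real.add_one_le_exp (-(a * (1 - a)))
  have hEF : Real.exp (a * (1 - a)) * Real.exp (-(a * (1 - a))) = 1 := by
    rw [← Real.exp_add, add_neg_cancel, Real.exp_zero]
  by_contra! h
  nlinarith [mul_le_mul_of_nonneg_right h (Real.exp_pos (-(a * (1 - a)))).le,
    pow_pos (sub_pos.2 ha) 3]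

lemma Real.exists_exp_neg_mul_lt_one_sub {b : ℝ} (hb : 1 < b) :
    ∃ s, 0 < s ∧ s < 1 ∧ Real.exp (-(b * s)) < 1 - s := by
  have hb0 : 0 < b := by linarith
  have hs0 : 0 < (b - 1) / (2 * b) := by positivity
  have hs1 : (b - 1) / (2 * b) < 1 := by rw [div_lt_one (by positivity)]; linarith
  refine ⟨_, hs0, hs1, ?_⟩
  have hbs : b * ((b - 1) / (2 * b)) = (b - 1) / 2 := by field_simp
  rw [hbs]
  -- `exp ((b - 1) / 2) ≥ (b + 1) / 2` and `(1 - s) * (b + 1) / 2 = 1 + s * (b - 1) / 2`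
  have hF := Real.add_one_le_exp ((b - 1) / 2)
  have hEF : Real.exp (-((b - 1) / 2)) * Real.exp ((b - 1) / 2) = 1 := by
    rw [← Real.exp_add, neg_add_cancel, Real.exp_zero]
  by_contra! h
  nlinarith [mul_le_mul_of_nonneg_right h (Real.exp_pos ((b - 1) / 2)).le,
    mul_pos hs0 (sub_pos.2 hb)]

lemma Real.abs_log_natFloor_sub_log_le {z : ℝ} (hz : 1 ≤ z) :
    |Real.log ⌊z⌋₊ - Real.log z| ≤ Real.log 2 := by
  have hfloor : (1 : ℝ) ≤ ⌊z⌋₊ := by exact_mod_cast (Nat.one_le_floor_iff _).2 hz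
  have hle : (⌊z⌋₊ : ℝ) ≤ z := Nat.floor_le (by linarith)
  have hlt : z < 2 * ⌊z⌋₊ := by linarith [Nat.lt_floor_add_one z]
  rw [abs_sub_le_iff]
  constructor
  · linarith [Real.log_le_log (by linarith) hle, Real.log_nonneg (one_le_two : (1 : ℝ) ≤ 2)]
  · linarith [Real.log_le_log (by linarith) hlt.le,
      Real.log_mul two_ne_zero (by linarith : (⌊z⌋₊ : ℝ) ≠ 0)]

lemma Real.volume_preimage_one_sub_mul {a : ℝ} (ha : a ≠ 0) (E : Set ℝ) :
    volume ((fun x => 1 - a * x) ⁻¹' E) = ENNReal.ofReal |a⁻¹| * volume E := by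
  have h : (fun x : ℝ => 1 - a * x) = (fun y => 1 + y) ∘ (fun x => -a * x) := by
    ext x; simp [sub_eq_add_neg]
  rw [h, preimage_comp, Real.volume_preimage_mul_left (neg_ne_zero.2 ha),
    measure_preimage_add, inv_neg, abs_neg]

lemma ENNReal.tsum_ofReal_natCast_rpow_le {q : ℝ} (hq : 0 < q) {n : ℕ} (hn : 1 ≤ n) :
    ∑' i : ℕ, ENNReal.ofReal (((n + i + 1 : ℕ) : ℝ) ^ (-(q + 1))) ≤
      ENNReal.ofReal ((n : ℝ) ^ (-q) / q) := by
  have hn' : (0 : ℝ) < n := by exact_mod_cast hn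
  refine ENNReal.tsum_le_of_sum_range_le fun N => ?_
  rw [← ENNReal.ofReal_sum_of_nonneg fun i _ => Real.rpow_nonneg (Nat.cast_nonneg _) _]
  apply ENNReal.ofReal_le_ofReal
  have hanti : AntitoneOn (fun t : ℝ => t ^ (-(q + 1))) (Icc (n : ℝ) (n + N)) :=
    (Real.antitoneOn_rpow_Ioi_of_exponent_nonpos (by linarith)).mono
      fun t ht => lt_of_lt_of_le hn' ht.1
  calc ∑ i ∈ Finset.range N, ((n + i + 1 : ℕ) : ℝ) ^ (-(q + 1))
      = ∑ i ∈ Finset.range N, ((n : ℝ) + ((i + 1 : ℕ) : ℝ)) ^ (-(q + 1)) := by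
        push_cast; ring_nf
    _ ≤ ∫ t in (n : ℝ)..n + N, t ^ (-(q + 1)) := hanti.sum_le_integral
    _ = ((n : ℝ) ^ (-q) - (n + N : ℝ) ^ (-q)) / q := by
        rw [integral_rpow (Or.inr ⟨by linarith, fun h => ?_⟩)]
        · rw [show -(q + 1) + 1 = -q by ring]
          field_simp
          ring
        · rw [uIcc_of_le (by linarith)] at h
          exact hn'.not_ge h.1
    _ ≤ (n : ℝ) ^ (-q) / q := by
        gcongr
        linarith [Real.rpow_nonneg (show (0 : ℝ) ≤ n + N by positivity) (-q)]

lemma MeasureTheory.ae_eventually_notMem_of_le_geometric {α : Type*} [MeasurableSpace α]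
    {μ : Measure α} {B : ℕ → Set α} {c r : ℝ≥0∞} (hc : c ≠ ∞) (hr : r < 1)
    (hB : ∀ k, μ (B (k + 1)) ≤ c * r ^ k) :
    ∀ᵐ x ∂μ, ∀ᶠ k in atTop, x ∉ B k := by
  have hsum : ∑' k, μ (B (k + 1)) ≠ ∞ := by
    refine ne_top_of_le_ne_top ?_ (ENNReal.tsum_le_tsum hB)
    rw [ENNReal.tsum_mul_left, ENNReal.tsum_geometric]
    exact ENNReal.mul_ne_top hc (ENNReal.inv_ne_top.2 (tsub_pos_of_lt hr).ne')
  filter_upwards [ae_eventually_notMem hsum] with x hx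
  rw [← map_add_atTop_eq_nat 1]
  exact hx

lemma floor_one_div_eq_of_mem_Ioc {a : ℕ} {x : ℝ} (hx : x ∈ Ioc ((a : ℝ) + 1)⁻¹ (a : ℝ)⁻¹) :
    ⌊1 / x⌋₊ = a := by
  have hx0 : 0 < x := lt_trans (by positivity) hx.1
  rw [Nat.floor_eq_iff (by positivity), one_div]
  refine ⟨?_, (inv_lt_comm₀ (by positivity) hx0).1 hx.1⟩
  rcases a.eq_zero_or_pos with rfl | ha
  · simp [hx0.le]
  · exact (le_inv_comm₀ (by positivity) hx0).2 hx.2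

lemma mem_Ioc_floor_one_div {x : ℝ} (hx : x ∈ Ioc 0 1) :
    x ∈ Ioc ((⌊1 / x⌋₊ : ℝ) + 1)⁻¹ (⌊1 / x⌋₊ : ℝ)⁻¹ := by
  obtain ⟨hx0, hx1⟩ := hx
  have hfloor : (1 : ℝ) ≤ ⌊1 / x⌋₊ := by
    exact_mod_cast (Nat.one_le_floor_iff _).2 (by rw [le_div_iff₀ hx0]; linarith)
  constructor
  · rw [inv_lt_comm₀ (by positivity) hx0, ← one_div]
    exact Nat.lt_floor_add_one _
  · rw [le_inv_comm₀ hx0 (by positivity), ← one_div]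
    exact Nat.floor_le (by positivity)

lemma pierceT_eq_of_mem_Ioc {a : ℕ} {x : ℝ} (hx : x ∈ Ioc ((a : ℝ) + 1)⁻¹ (a : ℝ)⁻¹) :
    pierceT x = 1 - a * x := by
  have hx0 : x ≠ 0 := (lt_trans (by positivity) hx.1).ne'
  rw [pierceT, if_neg hx0, floor_one_div_eq_of_mem_Ioc hx]

lemma pierceT_mem_Ico_of_mem_Ioc {a : ℕ} {x : ℝ} (hx : x ∈ Ioc ((a : ℝ) + 1)⁻¹ (a : ℝ)⁻¹) :
    pierceT x ∈ Ico 0 ((a : ℝ) + 1)⁻¹ := by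
  rw [pierceT_eq_of_mem_Ioc hx]
  have hx0 : 0 < x := lt_trans (by positivity) hx.1
  have ha : (0 : ℝ) < a := by
    rcases a.eq_zero_or_pos with rfl | ha
    · simp at hx
    · exact_mod_cast ha
  obtain ⟨h1, h2⟩ := hx
  rw [inv_lt_iff_one_lt_mul₀ (by positivity)] at h1
  have h2' : a * x ≤ 1 := by
    simpa [ha.ne'] using mul_le_mul_of_nonneg_left h2 ha.le
  constructor
  · linarith
  · rw [← one_div, lt_div_iff₀ (by positivity)]
    nlinarith

lemma pierceT_mapsTo_Icc : MapsTo pierceT (Icc 0 1) (Icc 0 1) := by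
  intro x hx
  rcases hx.1.eq_or_lt with rfl | hx0
  · simp [pierceT]
  · have h := pierceT_mem_Ico_of_mem_Ioc (mem_Ioc_floor_one_div ⟨hx0, hx.2⟩)
    exact ⟨h.1, h.2.le.trans (inv_le_one_of_one_le₀ (by simp))⟩

lemma volume_preimage_pierceT_inter_branch_le (S : Set ℝ) {a : ℕ} (ha : a ≠ 0) :
    volume (pierceT ⁻¹' S ∩ Ioc ((a : ℝ) + 1)⁻¹ (a : ℝ)⁻¹) ≤
      ENNReal.ofReal (a : ℝ)⁻¹ * volume (S ∩ Ioc 0 ((a : ℝ) + 1)⁻¹) := by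
  have ha' : (0 : ℝ) < a := by positivity
  have hsub : pierceT ⁻¹' S ∩ Ioc ((a : ℝ) + 1)⁻¹ (a : ℝ)⁻¹ ⊆
      (fun x : ℝ => 1 - a * x) ⁻¹' (S ∩ Ico 0 ((a : ℝ) + 1)⁻¹) := by
    rintro x ⟨hxS, hx⟩
    rw [mem_preimage, ← pierceT_eq_of_mem_Ioc hx]
    exact ⟨hxS, pierceT_mem_Ico_of_mem_Ioc hx⟩
  calc volume (pierceT ⁻¹' S ∩ Ioc ((a : ℝ) + 1)⁻¹ (a : ℝ)⁻¹)
      ≤ volume ((fun x : ℝ => 1 - a * x) ⁻¹' (S ∩ Ico 0 ((a : ℝ) + 1)⁻¹)) := measure_mono hsub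
    _ = ENNReal.ofReal (a : ℝ)⁻¹ * volume (S ∩ Ico 0 ((a : ℝ) + 1)⁻¹) := by
      rw [Real.volume_preimage_one_sub_mul ha'.ne', abs_of_pos (inv_pos.2 ha')]
    _ = ENNReal.ofReal (a : ℝ)⁻¹ * volume (S ∩ Ioc 0 ((a : ℝ) + 1)⁻¹) := by
      rw [measure_congr ((ae_eq_refl S).inter Ico_ae_eq_Ioc)]

def HasTailBound (S : Set ℝ) (C : ℝ≥0∞) (q : ℝ) : Prop :=
  ∀ n : ℕ, 1 ≤ n → volume (S ∩ Ioc 0 ((n : ℝ) + 1)⁻¹) ≤ C * ENNReal.ofReal ((n : ℝ) ^ (-q))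

lemma volume_preimage_pierceT_inter_Ioc_le_tsum {S : Set ℝ} {C : ℝ≥0∞} {q : ℝ}
    (hS : HasTailBound S C q) (n : ℕ) :
    volume (pierceT ⁻¹' S ∩ Ioc 0 ((n : ℝ) + 1)⁻¹) ≤
      C * ∑' i : ℕ, ENNReal.ofReal (((n + i + 1 : ℕ) : ℝ) ^ (-(q + 1))) := by
  have hcover : pierceT ⁻¹' S ∩ Ioc 0 ((n : ℝ) + 1)⁻¹ ⊆
      ⋃ i : ℕ, pierceT ⁻¹' S ∩ Ioc (((n + i + 1 : ℕ) : ℝ) + 1)⁻¹ ((n + i + 1 : ℕ) : ℝ)⁻¹ := by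
    rintro x ⟨hxS, hx⟩
    have hx1 : x ≤ 1 := hx.2.trans (inv_le_one_of_one_le₀ (by simp))
    have hn : n + 1 ≤ ⌊1 / x⌋₊ := by
      apply Nat.le_floor
      rw [one_div, Nat.cast_add_one]
      exact (le_inv_comm₀ (by positivity : (0 : ℝ) < n + 1) hx.1).2 hx.2
    refine mem_iUnion.2 ⟨⌊1 / x⌋₊ - (n + 1), hxS, ?_⟩
    rw [show n + (⌊1 / x⌋₊ - (n + 1)) + 1 = ⌊1 / x⌋₊ by omega]
    exact mem_Ioc_floor_one_div ⟨hx.1, hx1⟩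
  have hbranch (a : ℕ) (ha : a ≠ 0) :
      volume (pierceT ⁻¹' S ∩ Ioc ((a : ℝ) + 1)⁻¹ (a : ℝ)⁻¹) ≤
        C * ENNReal.ofReal ((a : ℝ) ^ (-(q + 1))) := by
    have ha' : (0 : ℝ) < a := by positivity
    calc _ ≤ ENNReal.ofReal (a : ℝ)⁻¹ * volume (S ∩ Ioc 0 ((a : ℝ) + 1)⁻¹) :=
          volume_preimage_pierceT_inter_branch_le S ha
      _ ≤ ENNReal.ofReal (a : ℝ)⁻¹ * (C * ENNReal.ofReal ((a : ℝ) ^ (-q))) := by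
          gcongr; exact hS a (Nat.one_le_iff_ne_zero.2 ha)
      _ = C * ENNReal.ofReal ((a : ℝ) ^ (-(q + 1))) := by
          rw [neg_add, Real.rpow_add ha', Real.rpow_neg_one,
            ENNReal.ofReal_mul (Real.rpow_nonneg ha'.le _)]
          ring
  calc _ ≤ ∑' i : ℕ, volume
        (pierceT ⁻¹' S ∩ Ioc (((n + i + 1 : ℕ) : ℝ) + 1)⁻¹ ((n + i + 1 : ℕ) : ℝ)⁻¹) :=
        (measure_mono hcover).trans (measure_iUnion_le _)
    _ ≤ _ := by
        rw [← ENNReal.tsum_mul_left]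
        exact ENNReal.tsum_le_tsum fun i => hbranch _ (Nat.succ_ne_zero _)

namespace HasTailBound

variable {S : Set ℝ} {C : ℝ≥0∞} {q : ℝ}

lemma preimage_pierceT (hq : 0 < q) (hS : HasTailBound S C q) :
    HasTailBound (pierceT ⁻¹' S) (C * ENNReal.ofReal q⁻¹) q := fun n hn =>
  calc volume (pierceT ⁻¹' S ∩ Ioc 0 ((n : ℝ) + 1)⁻¹)
      ≤ C * ENNReal.ofReal ((n : ℝ) ^ (-q) / q) :=
        (volume_preimage_pierceT_inter_Ioc_le_tsum hS n).trans
          (by gcongr; exact ENNReal.tsum_ofReal_natCast_rpow_le hq hn)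
    _ = C * ENNReal.ofReal q⁻¹ * ENNReal.ofReal ((n : ℝ) ^ (-q)) := by
        rw [div_eq_mul_inv, ENNReal.ofReal_mul (Real.rpow_nonneg (Nat.cast_nonneg _) _)]
        ring

lemma preimage_iterate_pierceT (hq : 0 < q) (hS : HasTailBound S C q) (k : ℕ) :
    HasTailBound (pierceT^[k] ⁻¹' S) (C * ENNReal.ofReal q⁻¹ ^ k) q := by
  induction k with
  | zero => simpa using hS
  | succ k ih =>
    rw [Function.iterate_succ, preimage_comp, pow_succ, ← mul_assoc]
    exact ih.preimage_pierceT hq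

lemma volume_preimage_pierceT_inter_Ioc_zero_one_le (hq : 0 < q) (hS : HasTailBound S C q) :
    volume (pierceT ⁻¹' S ∩ Ioc 0 1) ≤ C * (1 + ENNReal.ofReal q⁻¹) := by
  have h := volume_preimage_pierceT_inter_Ioc_le_tsum hS 0
  rw [tsum_eq_zero_add' ENNReal.summable] at h
  simp only [CharP.cast_eq_zero, zero_add, inv_one, Nat.cast_one, Real.one_rpow,
    ENNReal.ofReal_one] at h
  refine h.trans (by gcongr; simpa [add_comm] using ENNReal.tsum_ofReal_natCast_rpow_le hq le_rfl)

end HasTailBound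

lemma hasTailBound_Ici {t s : ℝ} (ht : 0 < t) (hs : 0 ≤ s) :
    HasTailBound (Ici t) (ENNReal.ofReal (t ^ (-s))) (1 + s) := by
  intro n hn
  have hn' : (0 : ℝ) < n := by exact_mod_cast hn
  by_cases htn : t ≤ ((n : ℝ) + 1)⁻¹
  · have hnt : (n : ℝ) ≤ t⁻¹ := by
      rw [le_inv_comm₀ hn' ht]
      exact htn.trans (inv_anti₀ hn' (by linarith))
    calc volume (Ici t ∩ Ioc 0 ((n : ℝ) + 1)⁻¹)
        ≤ volume (Ioc 0 ((n : ℝ) + 1)⁻¹) := measure_mono inter_subset_right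
      _ = ENNReal.ofReal ((n : ℝ) + 1)⁻¹ := by rw [Real.volume_Ioc, sub_zero]
      _ ≤ ENNReal.ofReal (t ^ (-s) * (n : ℝ) ^ (-(1 + s))) := by
        apply ENNReal.ofReal_le_ofReal
        calc ((n : ℝ) + 1)⁻¹ ≤ (n : ℝ)⁻¹ := inv_anti₀ hn' (by linarith)
          _ = (n : ℝ) ^ s * (n : ℝ) ^ (-(1 + s)) := by
            rw [← Real.rpow_add hn', show s + -(1 + s) = -1 by ring, Real.rpow_neg_one]
          _ ≤ t ^ (-s) * (n : ℝ) ^ (-(1 + s)) := by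
            rw [Real.rpow_neg ht.le, ← Real.inv_rpow ht.le]
            gcongr
      _ = _ := ENNReal.ofReal_mul (by positivity)
  · have hempty : Ici t ∩ Ioc 0 ((n : ℝ) + 1)⁻¹ = ∅ := by
      ext x
      simp only [mem_inter_iff, mem_Ici, mem_Ioc, mem_empty_iff_false, iff_false]
      intro ⟨h1, _, h2⟩
      exact htn (h1.trans h2)
    simp [hempty]

lemma hasTailBound_Iic {t s : ℝ} (ht : 0 ≤ t) (hs0 : 0 ≤ s) (hs1 : s ≤ 1) :
    HasTailBound (Iic t) (ENNReal.ofReal (t ^ s)) (1 - s) := by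
  intro n hn
  have hn' : (0 : ℝ) < n := by exact_mod_cast hn
  calc volume (Iic t ∩ Ioc 0 ((n : ℝ) + 1)⁻¹)
      ≤ volume (Ioc 0 (min t ((n : ℝ) + 1)⁻¹)) := by
        exact measure_mono fun x ⟨h1, h2⟩ => ⟨h2.1, le_min h1 h2.2⟩
    _ = ENNReal.ofReal (min t ((n : ℝ) + 1)⁻¹) := by rw [Real.volume_Ioc, sub_zero]
    _ ≤ ENNReal.ofReal (t ^ s * (n : ℝ) ^ (-(1 - s))) := by
        apply ENNReal.ofReal_le_ofReal
        refine (Real.min_le_rpow_mul_rpow ht (by positivity) hs0 hs1).trans ?_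
        rw [Real.rpow_neg hn'.le, ← Real.inv_rpow hn'.le]
        gcongr
        linarith
    _ = _ := ENNReal.ofReal_mul (by positivity)

lemma ae_eventually_iterate_pierceT_notMem {S : ℕ → Set ℝ} {ρ q : ℝ} (hρ : 0 ≤ ρ) (hρq : ρ < q)
    (hS : ∀ k, HasTailBound (S k) (ENNReal.ofReal (ρ ^ (k + 1))) q) :
    ∀ᵐ x ∂(volume.restrict (Ioc 0 1)), ∀ᶠ k in atTop, pierceT^[k] x ∉ S k := by
  have hq : 0 < q := hρ.trans_lt hρq
  refine MeasureTheory.ae_eventually_notMem_of_le_geometric (B := fun k => pierceT^[k] ⁻¹' S k)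
    (c := ENNReal.ofReal (ρ ^ 2) * (1 + ENNReal.ofReal q⁻¹)) (r := ENNReal.ofReal (ρ * q⁻¹))
    (by finiteness) (ENNReal.ofReal_lt_one.2 (by rwa [← div_eq_mul_inv, div_lt_one hq]))
    fun k => ?_
  rw [Measure.restrict_apply' measurableSet_Ioc, Function.iterate_succ, preimage_comp]
  refine (((hS (k + 1)).preimage_iterate_pierceT hq k)
    |>.volume_preimage_pierceT_inter_Ioc_zero_one_le hq).trans (le_of_eq ?_)
  rw [ENNReal.ofReal_mul hρ, ENNReal.ofReal_pow hρ, ENNReal.ofReal_pow hρ]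
  ring

lemma ae_eventually_neg_log_iterate_pierceT_div_mem_Ioo {a b : ℝ} (ha : a < 1) (hb : 1 < b) :
    ∀ᵐ x ∂(volume.restrict (Ioc 0 1)),
      ∀ᶠ k : ℕ in atTop, -Real.log (pierceT^[k] x) / (k + 1) ∈ Ioo a b := by
  obtain ⟨s, hs, has⟩ := Real.exists_exp_mul_lt_one_add ha
  obtain ⟨s', hs'0, hs'1, hbs'⟩ := Real.exists_exp_neg_mul_lt_one_sub hb
  have hexp (c s : ℝ) (k : ℕ) :
      Real.exp (-(c * (k + 1))) ^ s = Real.exp (-(c * s)) ^ (k + 1) := by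
    rw [← Real.exp_mul, ← Real.exp_nat_mul]
    push_cast
    ring_nf
  have hlow := ae_eventually_iterate_pierceT_notMem
    (S := fun k => Ici (Real.exp (-(a * (k + 1))))) (Real.exp_pos _).le has fun k => by
      convert hasTailBound_Ici (Real.exp_pos _) hs.le using 2
      rw [hexp, mul_neg, neg_neg]
  have hhigh := ae_eventually_iterate_pierceT_notMem
    (S := fun k => Iic (Real.exp (-(b * (k + 1))))) (Real.exp_pos _).le hbs' fun k => by
      convert hasTailBound_Iic (Real.exp_pos _).le hs'0.le hs'1.le using 2
      rw [hexp]
  filter_upwards [hlow, hhigh] with x hl hh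
  filter_upwards [hl, hh] with k hkl hkh
  simp only [mem_Ici, mem_Iic, not_le] at hkl hkh
  have hy : 0 < pierceT^[k] x := (Real.exp_pos _).trans hkh
  have hk : (0 : ℝ) < k + 1 := by positivity
  have hlog_lt := (Real.log_lt_iff_lt_exp hy).2 hkl
  have hlt_log := (Real.lt_log_iff_exp_lt hy).2 hkh
  constructor
  · rw [lt_div_iff₀ hk]; linarith
  · rw [div_lt_iff₀ hk]; linarith

theorem ae_tendsto_neg_log_iterate_pierceT_div :
    ∀ᵐ x ∂(volume.restrict (Ioc 0 1)),
      Tendsto (fun k : ℕ => -Real.log (pierceT^[k] x) / (k + 1)) atTop (𝓝 1) := by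
  have h : ∀ᵐ x ∂(volume.restrict (Ioc 0 1)), ∀ a b : ℚ, (a : ℝ) < 1 → 1 < (b : ℝ) →
      ∀ᶠ k : ℕ in atTop, -Real.log (pierceT^[k] x) / (k + 1) ∈ Ioo (a : ℝ) b := by
    refine ae_all_iff.2 fun a => ae_all_iff.2 fun b => ?_
    by_cases hab : (a : ℝ) < 1 ∧ 1 < (b : ℝ)
    · filter_upwards [ae_eventually_neg_log_iterate_pierceT_div_mem_Ioo hab.1 hab.2]
        with x hx _ _ using hx
    · exact Eventually.of_forall fun x ha hb => absurd ⟨ha, hb⟩ hab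
  filter_upwards [h] with x hx
  refine tendsto_order.2 ⟨fun a' ha' => ?_, fun b' hb' => ?_⟩
  · obtain ⟨a, ha'a, ha1⟩ := exists_rat_btwn ha'
    exact (hx a 2 ha1 (by norm_num)).mono fun k hk => ha'a.trans hk.1
  · obtain ⟨b, h1b, hbb'⟩ := exists_rat_btwn hb'
    exact (hx 0 b (by norm_num) h1b).mono fun k hk => hk.2.trans hbb'

lemma enlog_pierceD1 {y : ℝ} (hy : y ≠ 0) :
    enlog (pierceD1 y) = ENNReal.ofReal (Real.log ⌊1 / y⌋₊) := by
  simp [enlog, pierceD1, hy]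

theorem tendsto_enlog_pierceDigit_div {x : ℝ} (hx : x ∈ Icc 0 1)
    (h : Tendsto (fun k : ℕ => -Real.log (pierceT^[k] x) / (k + 1)) atTop (𝓝 1)) :
    Tendsto (fun n : ℕ => enlog (pierceDigit n x) / (n : ℝ≥0∞)) atTop (𝓝 1) := by
  have hne : ∀ᶠ k : ℕ in atTop, pierceT^[k] x ≠ 0 :=
    (h.eventually_ne one_ne_zero).mono fun k hk h0 => hk (by simp [h0])
  have hreal : Tendsto (fun k : ℕ => Real.log ⌊1 / pierceT^[k] x⌋₊ / (k + 1)) atTop (𝓝 1) := by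
    have hbound : Tendsto (fun k : ℕ => Real.log 2 / (k + 1)) atTop (𝓝 0) := by
      simpa [Function.comp_def] using
        (tendsto_const_div_atTop_nhds_zero_nat (Real.log 2)).comp (tendsto_add_atTop_nat 1)
    refine h.congr_dist (squeeze_zero' (Eventually.of_forall fun _ => dist_nonneg)
      (hne.mono fun k hk => ?_) hbound)
    have hy := pierceT_mapsTo_Icc.iterate k hx
    have hz : 1 ≤ 1 / pierceT^[k] x := one_le_one_div (hy.1.lt_of_ne' hk) hy.2
    have hlog : Real.log (1 / pierceT^[k] x) = -Real.log (pierceT^[k] x) := by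
      rw [one_div, Real.log_inv]
    rw [Real.dist_eq, ← sub_div, abs_div, abs_of_pos (by positivity : (0 : ℝ) < k + 1), ← hlog,
      abs_sub_comm]
    gcongr
    exact Real.abs_log_natFloor_sub_log_le hz
  rw [← tendsto_add_atTop_iff_nat 1]
  have := ENNReal.tendsto_ofReal hreal
  rw [ENNReal.ofReal_one] at this
  refine this.congr' (hne.mono fun k hk => ?_)
  simp only [pierceDigit, Nat.add_sub_cancel]
  rw [enlog_pierceD1 hk, ENNReal.ofReal_div_of_pos (by positivity)]
  norm_cast

theorem stmt18 :
    ∀ᵐ x ∂(volume.restrict (Set.Icc (0 : ℝ) 1)),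
      Tendsto (fun n : ℕ => enlog (pierceDigit n x) / (n : ℝ≥0∞)) atTop (𝓝 (1 : ℝ≥0∞)) := by
  rw [← Measure.restrict_congr_set Ioc_ae_eq_Icc]
  filter_upwards [ae_tendsto_neg_log_iterate_pierceT_div, ae_restrict_mem measurableSet_Ioc]
    with x hx hxI
  exact tendsto_enlog_pierceDigit_div (Ioc_subset_Icc_self hxI) hx
end
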